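/- For every γ > 0 and B > 0, the measure on ℝ \ {0} with density g_{B,+} + g_{B,−} with respect to Lebesgue measure is a Lévy measure, i.e. ∫_{ℝ \ {0}} min(1, r²)·(g_{B,+}(r) + g_{B,−}(r)) dr < ∞. -/

import Mathlib

/-!
Writing `φ_ε(t) = (2√(t² + B²/4) + εB) t`, we have `x_{B,ε}(r) = φ_ε⁻¹(π/(γr))`, and the inverse
function theorem gives `g_{B,ε}(r) = w_ε(x) / (4γ r² φ_ε'(x))` with `x = x_{B,ε}(r)` and `w_ε` the
integrand defining `h_{B,ε}`. Since `w_ε(x) ≤ x²` and `φ_ε'(x) ≥ 2x²/√(x² + B²/4)`, this is at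
most `(|x| + B/2) / (8γr²)`; and `|φ_ε(x)| ≥ (2|x| - B)|x|` forces `|x| ≤ √(π/(γ|r|)) + B`.
Hence `min(1, r²) g_{B,ε}(r)` is `O(|r|^(-1/2))` near `0` and `O(r⁻²)` at infinity.
-/

open MeasureTheory Filter Set Topology Real

noncomputable section

namespace LevyDensity

variable {B ε t : ℝ}

variable (B) in
def rad (t : ℝ) : ℝ := √(t ^ 2 + B ^ 2 / 4)

variable (B) in
def phi (ε t : ℝ) : ℝ := (2 * rad B t + ε * B) * t

variable (B) in
def phiDeriv (ε t : ℝ) : ℝ := 2 * rad B t + ε * B + 2 * t ^ 2 / rad B t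

variable (B) in
def weight (ε t : ℝ) : ℝ := (1 / 2 + ε * B / (4 * rad B t)) * t ^ 2

lemma rad_pos (hB : 0 < B) (t : ℝ) : 0 < rad B t :=
  Real.sqrt_pos.2 (by positivity)

lemma le_two_rad (B t : ℝ) : B ≤ 2 * rad B t := by
  have : B / 2 ≤ rad B t := Real.le_sqrt_of_sq_le (by nlinarith)
  linarith

lemma abs_le_rad (B t : ℝ) : |t| ≤ rad B t :=
  Real.abs_le_sqrt (by nlinarith)

lemma rad_le_abs_add (hB : 0 ≤ B) (t : ℝ) : rad B t ≤ |t| + B / 2 :=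
  Real.sqrt_le_iff.2 ⟨by positivity, by nlinarith [sq_abs t, abs_nonneg t]⟩

lemma abs_mul_le_of_abs_le_one (hB : 0 ≤ B) (hε : |ε| ≤ 1) : |ε * B| ≤ B := by
  rw [abs_mul, abs_of_nonneg hB]
  exact mul_le_of_le_one_left hB hε

lemma phi_neg (B ε t : ℝ) : phi B ε (-t) = -phi B ε t := by
  simp only [phi, rad, neg_sq]
  ring

lemma continuous_rad (B : ℝ) : Continuous (rad B) := by
  unfold rad; fun_prop

lemma continuous_phi (B ε : ℝ) : Continuous (phi B ε) := by
  have := continuous_rad B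
  unfold phi; fun_prop

lemma hasDerivAt_rad (hB : 0 < B) (t : ℝ) : HasDerivAt (rad B) (t / rad B t) t := by
  refine (((hasDerivAt_pow 2 t).add_const (B ^ 2 / 4)).sqrt (by positivity)).congr_deriv ?_
  simp only [rad, Nat.cast_ofNat]
  ring

lemma hasDerivAt_phi (hB : 0 < B) (ε t : ℝ) : HasDerivAt (phi B ε) (phiDeriv B ε t) t := by
  refine ((((hasDerivAt_rad hB t).const_mul 2).add_const (ε * B)).mul
    (hasDerivAt_id t)).congr_deriv ?_
  simp only [phiDeriv, id]
  field_simp [(rad_pos hB t).ne']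
  ring

lemma phiDeriv_pos (hB : 0 < B) (hε : |ε| ≤ 1) (ht : t ≠ 0) : 0 < phiDeriv B ε t := by
  have := le_two_rad B t
  have := (abs_le.1 (abs_mul_le_of_abs_le_one hB.le hε)).1
  have : 0 < 2 * t ^ 2 / rad B t := div_pos (by positivity) (rad_pos hB t)
  unfold phiDeriv; linarith

lemma strictMono_of_hasDerivAt_pos_of_ne {f f' : ℝ → ℝ} (a : ℝ) (hf : Continuous f)
    (hf' : ∀ x, HasDerivAt f (f' x) x) (hpos : ∀ x, x ≠ a → 0 < f' x) : StrictMono f := by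
  have hmono : ∀ D : Set ℝ, Convex ℝ D → a ∉ interior D → StrictMonoOn f D :=
    fun D hD ha => strictMonoOn_of_deriv_pos hD hf.continuousOn fun x hx => by
      rw [(hf' x).deriv]
      exact hpos x (ne_of_mem_of_not_mem hx ha)
  exact StrictMonoOn.Iic_union_Ici (hmono _ (convex_Iic a) (by simp))
    (hmono _ (convex_Ici a) (by simp))

lemma strictMono_phi (hB : 0 < B) (hε : |ε| ≤ 1) : StrictMono (phi B ε) :=
  strictMono_of_hasDerivAt_pos_of_ne 0 (continuous_phi B ε) (hasDerivAt_phi hB ε)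
    fun _ ht => phiDeriv_pos hB hε ht

lemma tendsto_phi_atTop (hB : 0 < B) (hε : |ε| ≤ 1) : Tendsto (phi B ε) atTop atTop := by
  refine tendsto_atTop_mono' atTop ?_ tendsto_id
  filter_upwards [eventually_ge_atTop (B + 1)] with t ht
  have hrad : t ≤ rad B t := (le_abs_self t).trans (abs_le_rad B t)
  have := (abs_le.1 (abs_mul_le_of_abs_le_one hB.le hε)).1
  simp only [id, phi]
  nlinarith

lemma surjective_phi (hB : 0 < B) (hε : |ε| ≤ 1) : Function.Surjective (phi B ε) := by
  have hbot : Tendsto (phi B ε) atBot atBot := by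
    have := tendsto_neg_atTop_atBot.comp ((tendsto_phi_atTop hB hε).comp tendsto_neg_atBot_atTop)
    simpa [Function.comp_def, phi_neg] using this
  exact (continuous_phi B ε).surjective (tendsto_phi_atTop hB hε) hbot

lemma hasDerivAt_of_phi_comp_eventuallyEq (hB : 0 < B) (hε : |ε| ≤ 1) {x u : ℝ → ℝ}
    {u' r : ℝ} (hu : HasDerivAt u u' r) (hxu : ∀ᶠ s in 𝓝 r, phi B ε (x s) = u s)
    (hxr : x r ≠ 0) : HasDerivAt x (u' / phiDeriv B ε (x r)) r := by
  let ψ := (strictMono_phi hB hε).orderIsoOfSurjective _ (surjective_phi hB hε)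
  have hψ : ∀ y, phi B ε (ψ.symm y) = y :=
    (strictMono_phi hB hε).orderIsoOfSurjective_self_symm_apply _ _
  have hx : x =ᶠ[𝓝 r] ψ.symm ∘ u := hxu.mono fun s hs =>
    (strictMono_phi hB hε).injective (by rw [hs, Function.comp_apply, hψ])
  have hψu : ψ.symm (u r) = x r := hx.eq_of_nhds.symm
  have hψ' : HasDerivAt ψ.symm (phiDeriv B ε (x r))⁻¹ (u r) := by
    refine .of_local_left_inverse ψ.symm.continuous.continuousAt ?_
      (phiDeriv_pos hB hε hxr).ne' (.of_forall hψ)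
    rw [hψu]
    exact hasDerivAt_phi hB ε (x r)
  rw [div_eq_inv_mul]
  exact (hψ'.comp r hu).congr_of_eventuallyEq hx

lemma continuous_weight (hB : 0 < B) (ε : ℝ) : Continuous (weight B ε) :=
  (continuous_const.add (continuous_const.div (continuous_const.mul (continuous_rad B))
    fun t => (mul_pos four_pos (rad_pos hB t)).ne')).mul (continuous_pow 2)

lemma hasDerivAt_integral_weight (hB : 0 < B) (ε y : ℝ) :
    HasDerivAt (fun y => ∫ t in (0 : ℝ)..y, weight B ε t) (weight B ε y) y :=
  intervalIntegral.integral_hasDerivAt_right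
    ((continuous_weight hB ε).intervalIntegrable _ _)
    ((continuous_weight hB ε).stronglyMeasurableAtFilter _ _)
    (continuous_weight hB ε).continuousAt

lemma hasDerivAt_pi_div_mul {γ r : ℝ} (hr : r ≠ 0) :
    HasDerivAt (fun s => π / (γ * s)) (-(π / γ) / r ^ 2) r := by
  refine (((hasDerivAt_inv hr).const_mul (π / γ)).congr_deriv (by ring)).congr_of_eventuallyEq ?_
  exact .of_forall fun s => by dsimp only; rw [← div_div, div_eq_mul_inv]

lemma ne_zero_of_phi_eq {γ r X : ℝ} (hγ : 0 < γ) (hr : r ≠ 0) (hX : phi B ε X = π / (γ * r)) :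
    X ≠ 0 := by
  rintro rfl
  rw [phi, mul_zero, eq_comm] at hX
  exact div_ne_zero pi_ne_zero (mul_ne_zero hγ.ne' hr) hX

lemma signed_deriv_eq (hB : 0 < B) (hε : |ε| ≤ 1) {γ : ℝ} (hγ : 0 < γ) {x h : ℝ → ℝ}
    (hx : ∀ r, r ≠ 0 → phi B ε (x r) = π / (γ * r))
    (hh : ∀ r, r ≠ 0 → h r = 1 / (4 * π) *
      (if 0 < r then ∫ t in (0 : ℝ)..x r, weight B ε t else ∫ t in x r..(0 : ℝ), weight B ε t))
    {r : ℝ} (hr : r ≠ 0) :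
    (if 0 < r then -deriv h r else deriv h r) =
      weight B ε (x r) / (4 * γ * r ^ 2 * phiDeriv B ε (x r)) := by
  have hxr := ne_zero_of_phi_eq hγ hr (hx r hr)
  have hW := (hasDerivAt_integral_weight hB ε (x r)).comp r
    (hasDerivAt_of_phi_comp_eventuallyEq hB hε (hasDerivAt_pi_div_mul hr)
      ((eventually_ne_nhds hr).mono hx) hxr)
  rcases hr.lt_or_gt with hneg | hpos
  · have hd : h =ᶠ[𝓝 r] fun s => -(1 / (4 * π) * ∫ t in (0 : ℝ)..x s, weight B ε t) := by
      filter_upwards [eventually_lt_nhds hneg] with s hs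
      rw [hh s hs.ne, if_neg hs.not_gt, intervalIntegral.integral_symm, mul_neg]
    rw [if_neg hneg.not_gt, ((hW.const_mul _).neg.congr_of_eventuallyEq hd).deriv]
    field_simp
  · have hd : h =ᶠ[𝓝 r] fun s => 1 / (4 * π) * ∫ t in (0 : ℝ)..x s, weight B ε t := by
      filter_upwards [eventually_gt_nhds hpos] with s hs
      rw [hh s hs.ne', if_pos hs]
    rw [if_pos hpos, ((hW.const_mul _).congr_of_eventuallyEq hd).deriv]
    field_simp

lemma weight_le_sq (hB : 0 < B) (hε : |ε| ≤ 1) (t : ℝ) : weight B ε t ≤ t ^ 2 := by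
  have hcoef : ε * B / (4 * rad B t) ≤ 1 / 2 := by
    rw [div_le_iff₀ (mul_pos four_pos (rad_pos hB t))]
    linarith [(abs_le.1 (abs_mul_le_of_abs_le_one hB.le hε)).2, le_two_rad B t]
  exact mul_le_of_le_one_left (sq_nonneg t) (by linarith)

lemma weight_div_phiDeriv_le (hB : 0 < B) (hε : |ε| ≤ 1) (ht : t ≠ 0) :
    weight B ε t / phiDeriv B ε t ≤ (|t| + B / 2) / 2 := by
  have hrad := rad_pos hB t
  have hφ : 2 * t ^ 2 / rad B t ≤ phiDeriv B ε t := by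
    have := (abs_le.1 (abs_mul_le_of_abs_le_one hB.le hε)).1
    unfold phiDeriv
    linarith [le_two_rad B t]
  calc weight B ε t / phiDeriv B ε t ≤ t ^ 2 / (2 * t ^ 2 / rad B t) :=
        div_le_div₀ (sq_nonneg t) (weight_le_sq hB hε t) (by positivity) hφ
    _ = rad B t / 2 := by field_simp
    _ ≤ (|t| + B / 2) / 2 := by linarith [rad_le_abs_add hB.le t]

lemma abs_le_sqrt_abs_phi_add (hB : 0 < B) (hε : |ε| ≤ 1) (t : ℝ) :
    |t| ≤ √|phi B ε t| + B := by
  rcases le_or_gt |t| B with ht | ht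
  · linarith [Real.sqrt_nonneg |phi B ε t|]
  have hfac : 2 * |t| - B ≤ 2 * rad B t + ε * B := by
    linarith [abs_le_rad B t, (abs_le.1 (abs_mul_le_of_abs_le_one hB.le hε)).1]
  have hφ : |phi B ε t| = (2 * rad B t + ε * B) * |t| := by
    rw [phi, abs_mul, abs_of_nonneg (by linarith)]
  have : |t| ^ 2 ≤ |phi B ε t| := by rw [hφ]; nlinarith
  linarith [Real.le_sqrt_of_sq_le this]

lemma signed_deriv_le (hB : 0 < B) (hε : |ε| ≤ 1) {γ : ℝ} (hγ : 0 < γ) {x h : ℝ → ℝ}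
    (hx : ∀ r, r ≠ 0 → phi B ε (x r) = π / (γ * r))
    (hh : ∀ r, r ≠ 0 → h r = 1 / (4 * π) *
      (if 0 < r then ∫ t in (0 : ℝ)..x r, weight B ε t else ∫ t in x r..(0 : ℝ), weight B ε t))
    {r : ℝ} (hr : r ≠ 0) :
    (if 0 < r then -deriv h r else deriv h r) ≤ (√(π / γ / |r|) + 3 * B / 2) / (8 * γ * r ^ 2) := by
  have hxr := ne_zero_of_phi_eq hγ hr (hx r hr)
  have hφ : |phi B ε (x r)| = π / γ / |r| := by
    rw [hx r hr, abs_div, abs_mul, abs_of_pos pi_pos, abs_of_pos hγ, div_div]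
  have hX := abs_le_sqrt_abs_phi_add hB hε (x r)
  rw [hφ] at hX
  rw [signed_deriv_eq hB hε hγ hx hh hr]
  calc weight B ε (x r) / (4 * γ * r ^ 2 * phiDeriv B ε (x r))
      = weight B ε (x r) / phiDeriv B ε (x r) / (4 * γ * r ^ 2) := by rw [div_div, mul_comm]
    _ ≤ (|x r| + B / 2) / 2 / (4 * γ * r ^ 2) := by
        gcongr ?_ / _
        exact weight_div_phiDeriv_le hB hε hxr
    _ ≤ (√(π / γ / |r|) + B + B / 2) / 2 / (4 * γ * r ^ 2) := by gcongr
    _ = (√(π / γ / |r|) + 3 * B / 2) / (8 * γ * r ^ 2) := by ring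

lemma integrable_of_even {E : Type*} [NormedAddCommGroup E] {f : ℝ → E}
    (hf : ∀ r, f (-r) = f r) (h : IntegrableOn f (Ioi 0)) : Integrable f := by
  have hIio : IntegrableOn f (Iio 0) := by
    have := ((Measure.measurePreserving_neg (volume : Measure ℝ)).integrableOn_comp_preimage
      (Homeomorph.neg ℝ).measurableEmbedding).2 h
    simpa [Function.comp_def, hf] using this
  rw [← integrableOn_univ, ← Iio_union_Ici (a := (0 : ℝ)), integrableOn_union,
    integrableOn_Ici_iff_integrableOn_Ioi]
  exact ⟨hIio, h⟩

lemma integrable_min_one_sq_div_sq_mul_rpow {a : ℝ} (ha0 : -1 < a) (ha1 : a < 1) :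
    Integrable fun r : ℝ => min 1 (r ^ 2) / r ^ 2 * |r| ^ (-a) := by
  refine integrable_of_even (fun r => by simp only [neg_sq, abs_neg]) ?_
  rw [← Ioc_union_Ioi_eq_Ioi zero_le_one, integrableOn_union]
  constructor
  · refine (intervalIntegral.intervalIntegrable_rpow' (by linarith : -1 < -a)).1.congr_fun
      (fun r ⟨hr0, hr1⟩ => ?_) measurableSet_Ioc
    rw [min_eq_right (by nlinarith), div_self (by positivity), one_mul, abs_of_pos hr0]
  · refine (integrableOn_Ioi_rpow_of_lt (by linarith : -2 + -a < -1) one_pos).congr_fun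
      (fun r (hr : 1 < r) => ?_) measurableSet_Ioi
    have hr0 : 0 < r := one_pos.trans hr
    dsimp only
    rw [min_eq_left (by nlinarith), abs_of_pos hr0, Real.rpow_add hr0, Real.rpow_neg hr0.le 2,
      Real.rpow_two, one_div]

lemma integrable_min_one_sq_div_sq_mul_sqrt_add (c d : ℝ) :
    Integrable fun r : ℝ => min 1 (r ^ 2) / r ^ 2 * (√(c / |r|) + d) := by
  have h := ((integrable_min_one_sq_div_sq_mul_rpow (a := 1 / 2) (by norm_num)
    (by norm_num)).const_mul √c).add
    ((integrable_min_one_sq_div_sq_mul_rpow (a := 0) neg_one_lt_zero one_pos).const_mul d)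
  refine h.congr (.of_forall fun r => ?_)
  simp only [Pi.add_apply]
  rw [neg_zero, Real.rpow_zero, Real.rpow_neg (abs_nonneg r), ← Real.sqrt_eq_rpow,
    Real.sqrt_div' c (abs_nonneg r)]
  ring

end LevyDensity

end

open LevyDensity

theorem stmt_6 (γ B : ℝ) (hγ : 0 < γ) (hB : 0 < B)
    (x h g : ℝ → ℝ → ℝ)
    (hx : ∀ ε : ℝ, (ε = 1 ∨ ε = -1) → ∀ r : ℝ, r ≠ 0 →
      (2 * Real.sqrt (x ε r ^ 2 + B ^ 2 / 4) + ε * B) * x ε r = Real.pi / (γ * r))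
    (hh : ∀ ε : ℝ, (ε = 1 ∨ ε = -1) → ∀ r : ℝ, r ≠ 0 →
      h ε r = (1 / (4 * Real.pi)) *
        (if 0 < r then
          ∫ t in (0 : ℝ)..(x ε r), (1 / 2 + ε * B / (4 * Real.sqrt (t ^ 2 + B ^ 2 / 4))) * t ^ 2
         else
          ∫ t in (x ε r)..(0 : ℝ), (1 / 2 + ε * B / (4 * Real.sqrt (t ^ 2 + B ^ 2 / 4))) * t ^ 2))
    (hg : ∀ ε : ℝ, (ε = 1 ∨ ε = -1) → ∀ r : ℝ, r ≠ 0 →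
      g ε r = if 0 < r then -(deriv (h ε) r) else deriv (h ε) r) :
    ∫⁻ r in ({0}ᶜ : Set ℝ),
      ENNReal.ofReal (min 1 (r ^ 2) * (g 1 r + g (-1) r)) < ⊤ := by
  have hg_le : ∀ ε : ℝ, (ε = 1 ∨ ε = -1) → ∀ r : ℝ, r ≠ 0 →
      g ε r ≤ (√(π / γ / |r|) + 3 * B / 2) / (8 * γ * r ^ 2) := by
    intro ε hε r hr
    have hε' : |ε| ≤ 1 := by rcases hε with rfl | rfl <;> norm_num
    rw [hg ε hε r hr]
    exact signed_deriv_le hB hε' hγ (hx ε hε) (hh ε hε) hr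
  have hbound : ∀ r ∈ ({0}ᶜ : Set ℝ), ENNReal.ofReal (min 1 (r ^ 2) * (g 1 r + g (-1) r)) ≤
      ENNReal.ofReal (1 / (4 * γ) * (min 1 (r ^ 2) / r ^ 2 * (√(π / γ / |r|) + 3 * B / 2))) := by
    intro r hr
    refine ENNReal.ofReal_le_ofReal ?_
    calc min 1 (r ^ 2) * (g 1 r + g (-1) r)
        ≤ min 1 (r ^ 2) * (2 * ((√(π / γ / |r|) + 3 * B / 2) / (8 * γ * r ^ 2))) := by
          refine mul_le_mul_of_nonneg_left ?_ (le_min zero_le_one (sq_nonneg r))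
          linarith [hg_le 1 (.inl rfl) r hr, hg_le (-1) (.inr rfl) r hr]
      _ = 1 / (4 * γ) * (min 1 (r ^ 2) / r ^ 2 * (√(π / γ / |r|) + 3 * B / 2)) := by
          field_simp
          ring
  exact (setLIntegral_mono' (measurableSet_singleton 0).compl hbound).trans_lt
    ((integrable_min_one_sq_div_sq_mul_sqrt_add _ _).const_mul _).integrableOn.lintegral_lt_top
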